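/- arXiv:1808.02458 — 2 statements merged into one kernel-verified Lean document; each statement's English description precedes it below -/
import Mathlib

section
/- (Rounding bidders degrades BIC by at most 2mε, Lemma 5.3 part 2.) Let μ be a (2mε)-BIC mechanism for the rounded product distribution ⨉_{i,j} ⌊V_{i,j}⌋_ε with 1-Lipschitz valuations, and define μ^ε(v) = μ(⌊v⌋_ε). Then μ^ε is (4mε)-BIC for ⨉_{i,j} V_{i,j}: for every bidder k and all types v_k, v'_k ∈ [0,H]^m, E_{v_{-k}}[u_k(v_k, μ^ε(v_k, v_{-k}))] ≥ E_{v_{-k}}[u_k(v_k, μ^ε(v'_k, v_{-k}))] − 4mε. -/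
open MeasureTheory

/-- The true product distribution ⨉_{i,j} V_{i,j} over full type profiles. -/
noncomputable def stmt13.Vpi {n m : ℕ} (V : Fin n → Fin m → Measure ℝ) :
    Measure (Fin n → Fin m → ℝ) :=
  Measure.pi fun i => Measure.pi fun j => V i j

/-- Rounding every coordinate of a profile down to the nearest multiple of ε. -/
noncomputable def stmt13.roundP {n m : ℕ} (ε : ℝ) (v : Fin n → Fin m → ℝ) :
    Fin n → Fin m → ℝ :=
  fun i j => ε * (⌊v i j / ε⌋ : ℝ)


/-- A.e. over the product, every coordinate lies in [0,H]. -/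
lemma stmt13.ae_box {n m : ℕ} {H : ℝ}
    (V : Fin n → Fin m → Measure ℝ) [∀ i j, IsProbabilityMeasure (V i j)]
    (hVsupp : ∀ i j, ∀ᵐ x ∂(V i j), 0 ≤ x ∧ x ≤ H) :
    ∀ᵐ v ∂(stmt13.Vpi V), ∀ i j, 0 ≤ v i j ∧ v i j ≤ H := by
  rw [ae_all_iff]
  intro i
  rw [ae_all_iff]
  intro j
  have h1 : ∀ᵐ u ∂(Measure.pi fun j => V i j), 0 ≤ u j ∧ u j ≤ H :=
    Measure.tendsto_eval_ae_ae (μ := fun j => V i j) (i := j) (hVsupp i j)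
  exact Measure.tendsto_eval_ae_ae (μ := fun i => Measure.pi fun j => V i j) (i := i) h1

/-- Any function of the rounded profile is integrable. -/
lemma stmt13.integrable_round {n m : ℕ} {ε H : ℝ} (hε : 0 < ε) (hH : 0 ≤ H)
    (V : Fin n → Fin m → Measure ℝ) [∀ i j, IsProbabilityMeasure (V i j)]
    (hVsupp : ∀ i j, ∀ᵐ x ∂(V i j), 0 ≤ x ∧ x ≤ H)
    (f : (Fin n → Fin m → ℝ) → ℝ) :
    Integrable (fun v => f (stmt13.roundP ε v)) (stmt13.Vpi V) := by
  classical
  set c : (Fin n → Fin m → ℝ) → (Fin n → Fin m → ℤ) := fun v i j => ⌊v i j / ε⌋ with hc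
  have hcm : Measurable c := by
    apply measurable_pi_lambda _ fun i => measurable_pi_lambda _ fun j => ?_
    exact Measurable.floor (by fun_prop)
  set g : (Fin n → Fin m → ℤ) → ℝ := fun z => f (fun i j => ε * (z i j : ℝ)) with hg
  have heq : (fun v => f (stmt13.roundP ε v)) = fun v => g (c v) := rfl
  rw [heq]
  set B : Finset (Fin n → Fin m → ℤ) :=
    Fintype.piFinset fun _ => Fintype.piFinset fun _ => Finset.Icc 0 ⌊H / ε⌋ with hB
  have hBne : B.Nonempty := by
    refine ⟨fun _ _ => 0, ?_⟩
    simp only [hB, Fintype.mem_piFinset, Finset.mem_Icc]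
    exact fun i j => ⟨le_refl 0, Int.floor_nonneg.2 (div_nonneg hH hε.le)⟩
  set M : ℝ := B.sup' hBne fun z => |g z| with hM
  have : IsProbabilityMeasure (stmt13.Vpi V) := by
    unfold stmt13.Vpi; infer_instance
  have hmeas : Measurable fun v => g (c v) := (measurable_of_countable g).comp hcm
  refine Integrable.mono' (integrable_const M) hmeas.aestronglyMeasurable ?_
  filter_upwards [stmt13.ae_box V hVsupp] with v hv
  have hcB : c v ∈ B := by
    simp only [hB, Fintype.mem_piFinset, Finset.mem_Icc]
    intro i j
    constructor
    · exact Int.floor_nonneg.2 (div_nonneg (hv i j).1 hε.le)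
    · exact Int.floor_le_floor (by gcongr; exact (hv i j).2)
  calc ‖g (c v)‖ = |g (c v)| := rfl
    _ ≤ M := Finset.le_sup' (fun z => |g z|) hcB

/-- Rounding bidders degrades BIC by at most 2mε (Lemma 5.3, part 2).  Let μ = (alloc, pay) be
(2mε)-BIC for the rounded distribution ⨉ ⌊V_{i,j}⌋_ε (interim utilities written as integrals of
functions of the rounded profile over ⨉ V_{i,j}, with bidder k's rounded type replaced via
`Function.update`), with 1-Lipschitz valuations.  Then μ^ε(v) := μ(⌊v⌋_ε) is (4mε)-BIC for
⨉ V_{i,j}. -/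
theorem stmt_13 {X : Type*} (n m : ℕ) (ε H : ℝ) (hε : 0 < ε) (hH : 0 ≤ H)
    (V : Fin n → Fin m → Measure ℝ) [∀ i j, IsProbabilityMeasure (V i j)]
    (hVsupp : ∀ i j, ∀ᵐ x ∂(V i j), 0 ≤ x ∧ x ≤ H)
    (val : Fin n → (Fin m → ℝ) → X → ℝ)
    (hLip : ∀ (k : Fin n) (u u' : Fin m → ℝ) (x : X),
      (∀ j, |u j - u' j| ≤ ε) → |val k u x - val k u' x| ≤ m * ε)
    (alloc : (Fin n → Fin m → ℝ) → X) (pay : (Fin n → Fin m → ℝ) → Fin n → ℝ)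
    (hBIC : ∀ (k : Fin n) (wk wk' : Fin m → ℝ),
      (∀ j, (∃ a : ℕ, wk j = a * ε) ∧ wk j ≤ H) →
      (∀ j, (∃ a : ℕ, wk' j = a * ε) ∧ wk' j ≤ H) →
      (∫ v, (val k wk (alloc (Function.update (stmt13.roundP ε v) k wk))
          - pay (Function.update (stmt13.roundP ε v) k wk) k) ∂(stmt13.Vpi V))
        ≥ (∫ v, (val k wk (alloc (Function.update (stmt13.roundP ε v) k wk'))
          - pay (Function.update (stmt13.roundP ε v) k wk') k) ∂(stmt13.Vpi V))
          - 2 * m * ε) :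
    ∀ (k : Fin n) (vk vk' : Fin m → ℝ),
      (∀ j, 0 ≤ vk j ∧ vk j ≤ H) → (∀ j, 0 ≤ vk' j ∧ vk' j ≤ H) →
      (∫ v, (val k vk (alloc (stmt13.roundP ε (Function.update v k vk)))
          - pay (stmt13.roundP ε (Function.update v k vk)) k) ∂(stmt13.Vpi V))
        ≥ (∫ v, (val k vk (alloc (stmt13.roundP ε (Function.update v k vk')))
          - pay (stmt13.roundP ε (Function.update v k vk')) k) ∂(stmt13.Vpi V))
          - 4 * m * ε := by
  classical
  intro k vk vk' hvk hvk'
  have hprob : IsProbabilityMeasure (stmt13.Vpi V) := by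
    unfold stmt13.Vpi; infer_instance
  -- rounded types
  set wk : Fin m → ℝ := fun j => ε * (⌊vk j / ε⌋ : ℝ) with hwk
  set wk' : Fin m → ℝ := fun j => ε * (⌊vk' j / ε⌋ : ℝ) with hwk'
  -- rounding commutes with update
  have key : ∀ (u : Fin m → ℝ) (v : Fin n → Fin m → ℝ),
      stmt13.roundP ε (Function.update v k u)
        = Function.update (stmt13.roundP ε v) k (fun j => ε * (⌊u j / ε⌋ : ℝ)) := by
    intro u v
    funext i j
    by_cases h : i = k
    · subst h
      simp [stmt13.roundP, Function.update_self]
    · simp [stmt13.roundP, Function.update_of_ne h]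
  -- closeness of vk to wk
  have hclose : ∀ (u : Fin m → ℝ), (∀ j, 0 ≤ u j ∧ u j ≤ H) →
      ∀ j, |u j - (fun j => ε * (⌊u j / ε⌋ : ℝ)) j| ≤ ε := by
    intro u hu j
    have h1 : (⌊u j / ε⌋ : ℝ) ≤ u j / ε := Int.floor_le _
    have h2 : u j / ε - 1 < (⌊u j / ε⌋ : ℝ) := Int.sub_one_lt_floor _
    rw [abs_le]
    have h3 : (fun j => ε * (⌊u j / ε⌋ : ℝ)) j = ε * (⌊u j / ε⌋ : ℝ) := rfl
    rw [h3]
    have h1' : (⌊u j / ε⌋ : ℝ) * ε ≤ u j := (le_div_iff₀ hε).1 h1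
    have h2' : u j < ((⌊u j / ε⌋ : ℝ) + 1) * ε := by
      rw [← div_lt_iff₀ hε]; linarith
    constructor
    · nlinarith
    · nlinarith
  -- lattice conditions
  have hlat : ∀ (u : Fin m → ℝ), (∀ j, 0 ≤ u j ∧ u j ≤ H) →
      ∀ j, (∃ a : ℕ, (fun j => ε * (⌊u j / ε⌋ : ℝ)) j = a * ε)
        ∧ (fun j => ε * (⌊u j / ε⌋ : ℝ)) j ≤ H := by
    intro u hu j
    constructor
    · refine ⟨⌊u j / ε⌋.toNat, ?_⟩
      have : ((⌊u j / ε⌋.toNat : ℤ) : ℝ) = (⌊u j / ε⌋ : ℝ) := by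
        norm_cast
        exact Int.toNat_of_nonneg (Int.floor_nonneg.2 (div_nonneg (hu j).1 hε.le))
      push_cast at this ⊢
      rw [this]; ring
    · have h1 : (⌊u j / ε⌋ : ℝ) ≤ u j / ε := Int.floor_le _
      have : ε * (⌊u j / ε⌋ : ℝ) ≤ ε * (u j / ε) := by
        exact mul_le_mul_of_nonneg_left h1 hε.le
      calc ε * (⌊u j / ε⌋ : ℝ) ≤ ε * (u j / ε) := this
        _ = u j := by field_simp
        _ ≤ H := (hu j).2
  -- the four integrands
  set a : (Fin n → Fin m → ℝ) → ℝ := fun v =>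
    val k vk (alloc (Function.update (stmt13.roundP ε v) k wk))
      - pay (Function.update (stmt13.roundP ε v) k wk) k with ha
  set b : (Fin n → Fin m → ℝ) → ℝ := fun v =>
    val k wk (alloc (Function.update (stmt13.roundP ε v) k wk))
      - pay (Function.update (stmt13.roundP ε v) k wk) k with hb
  set c : (Fin n → Fin m → ℝ) → ℝ := fun v =>
    val k wk (alloc (Function.update (stmt13.roundP ε v) k wk'))
      - pay (Function.update (stmt13.roundP ε v) k wk') k with hc
  set d : (Fin n → Fin m → ℝ) → ℝ := fun v =>
    val k vk (alloc (Function.update (stmt13.roundP ε v) k wk'))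
      - pay (Function.update (stmt13.roundP ε v) k wk') k with hd
  have hia : Integrable a (stmt13.Vpi V) :=
    stmt13.integrable_round hε hH V hVsupp
      (fun w => val k vk (alloc (Function.update w k wk)) - pay (Function.update w k wk) k)
  have hib : Integrable b (stmt13.Vpi V) :=
    stmt13.integrable_round hε hH V hVsupp
      (fun w => val k wk (alloc (Function.update w k wk)) - pay (Function.update w k wk) k)
  have hic : Integrable c (stmt13.Vpi V) :=
    stmt13.integrable_round hε hH V hVsupp
      (fun w => val k wk (alloc (Function.update w k wk')) - pay (Function.update w k wk') k)
  have hid : Integrable d (stmt13.Vpi V) :=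
    stmt13.integrable_round hε hH V hVsupp
      (fun w => val k vk (alloc (Function.update w k wk')) - pay (Function.update w k wk') k)
  -- pointwise bounds
  have hab : ∀ v, b v - a v ≤ m * ε := by
    intro v
    have := hLip k wk vk (alloc (Function.update (stmt13.roundP ε v) k wk)) ?_
    · simp only [ha, hb]
      have := abs_le.1 this
      linarith [this.2]
    · intro j
      rw [abs_sub_comm]
      exact hclose vk hvk j
  have hdc : ∀ v, d v - c v ≤ m * ε := by
    intro v
    have := hLip k vk wk (alloc (Function.update (stmt13.roundP ε v) k wk')) ?_
    · simp only [hc, hd]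
      have := abs_le.1 this
      linarith [this.2]
    · exact hclose vk hvk
  -- integral bounds
  have hme : (0:ℝ) ≤ m * ε := by positivity
  have h1 : ∫ v, b v ∂(stmt13.Vpi V) - ∫ v, a v ∂(stmt13.Vpi V) ≤ m * ε := by
    rw [← integral_sub hib hia]
    calc ∫ v, (b v - a v) ∂(stmt13.Vpi V)
        ≤ ∫ _, (m * ε : ℝ) ∂(stmt13.Vpi V) :=
          integral_mono (hib.sub hia) (integrable_const _) hab
      _ = m * ε := by simp
  have h2 : ∫ v, d v ∂(stmt13.Vpi V) - ∫ v, c v ∂(stmt13.Vpi V) ≤ m * ε := by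
    rw [← integral_sub hid hic]
    calc ∫ v, (d v - c v) ∂(stmt13.Vpi V)
        ≤ ∫ _, (m * ε : ℝ) ∂(stmt13.Vpi V) :=
          integral_mono (hid.sub hic) (integrable_const _) hdc
      _ = m * ε := by simp
  have h3 : ∫ v, b v ∂(stmt13.Vpi V) ≥ ∫ v, c v ∂(stmt13.Vpi V) - 2 * m * ε :=
    hBIC k wk wk' (hlat vk hvk) (hlat vk' hvk')
  -- rewrite the goal
  simp only [key]
  show ∫ v, a v ∂(stmt13.Vpi V) ≥ ∫ v, d v ∂(stmt13.Vpi V) - 4 * m * ε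
  linarith
end

section
/- (DSIC analogue, Lemma B.2 IC part.) Let μ be a (2mε)-DSIC mechanism on rounded types [0,H]_ε^{n·m} with 1-Lipschitz valuations, and define μ^ε(v) = μ(⌊v⌋_ε) on [0,H]^{n·m}. Then μ^ε is (4mε)-DSIC: for every bidder k, every profile v, and every deviation v'_k, E[u_k(v_k, μ^ε(v_k, v_{-k}))] ≥ E[u_k(v_k, μ^ε(v'_k, v_{-k}))] − 4mε. -/
/-!
Rounding a type down to the ε-grid moves each coordinate by at most ε, hence each valuation by
at most mε. Bidder `k` with true type `v k` evaluates both outcomes of `μ^ε` within mε of how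
the rounded type `⌊v k⌋_ε` evaluates them, and for the rounded type the rounded profiles are a
(2mε)-DSIC comparison; the two mε errors add up to the extra 2mε.
-/

namespace RoundDown

variable {ε : ℝ}

theorem mul_floor_div_le (hε : 0 < ε) (t : ℝ) : ε * ⌊t / ε⌋ ≤ t := by
  have := mul_le_mul_of_nonneg_left (Int.floor_le (t / ε)) hε.le
  rwa [mul_div_cancel₀ t hε.ne'] at this

theorem sub_lt_mul_floor_div (hε : 0 < ε) (t : ℝ) : t - ε < ε * ⌊t / ε⌋ := by
  have := mul_lt_mul_of_pos_left (Int.lt_floor_add_one (t / ε)) hε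
  rw [mul_div_cancel₀ t hε.ne'] at this
  linarith

theorem abs_sub_mul_floor_div_le (hε : 0 < ε) (t : ℝ) : |t - ε * ⌊t / ε⌋| ≤ ε := by
  rw [abs_le]
  constructor <;> linarith [mul_floor_div_le hε t, sub_lt_mul_floor_div hε t]

theorem exists_natCast_mul_eq_mul_floor_div {t : ℝ} (ht : 0 ≤ t) (hε : 0 < ε) :
    ∃ a : ℕ, ε * ⌊t / ε⌋ = a * ε := by
  refine ⟨⌊t / ε⌋₊, ?_⟩
  rw [← Int.natCast_floor_eq_floor (div_nonneg ht hε.le), mul_comm]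
  norm_cast

theorem mul_floor_div_mem_grid (hε : 0 < ε) {H t : ℝ} (ht : 0 ≤ t ∧ t ≤ H) :
    (∃ a : ℕ, ε * ⌊t / ε⌋ = a * ε) ∧ ε * ⌊t / ε⌋ ≤ H :=
  ⟨exists_natCast_mul_eq_mul_floor_div ht.1 hε, (mul_floor_div_le hε t).trans ht.2⟩

end RoundDown

theorem sub_ge_sub_sub_of_abs_sub_le {X : Type*} {f g : X → ℝ} {δ η p q : ℝ}
    (hfg : ∀ x, |f x - g x| ≤ δ) {a b : X} (h : g a - p ≥ g b - q - η) :
    f a - p ≥ f b - q - (η + 2 * δ) := by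
  linarith [(abs_le.1 (hfg a)).1, (abs_le.1 (hfg b)).2]

theorem stmt_15_general {X : Type*} (n m : ℕ) (ε H : ℝ) (hε : 0 < ε)
    (val : Fin n → (Fin m → ℝ) → X → ℝ)
    (hLip : ∀ (k : Fin n) (u u' : Fin m → ℝ) (x : X),
      (∀ j, |u j - u' j| ≤ ε) → |val k u x - val k u' x| ≤ m * ε)
    (alloc : (Fin n → Fin m → ℝ) → X) (pay : (Fin n → Fin m → ℝ) → Fin n → ℝ)
    (hDSIC : ∀ (w : Fin n → Fin m → ℝ),
      (∀ i j, (∃ a : ℕ, w i j = a * ε) ∧ w i j ≤ H) →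
      ∀ (k : Fin n) (wk' : Fin m → ℝ), (∀ j, (∃ a : ℕ, wk' j = a * ε) ∧ wk' j ≤ H) →
        val k (w k) (alloc w) - pay w k ≥
          val k (w k) (alloc (Function.update w k wk'))
            - pay (Function.update w k wk') k - 2 * m * ε) :
    ∀ (v : Fin n → Fin m → ℝ), (∀ i j, 0 ≤ v i j ∧ v i j ≤ H) →
    ∀ (k : Fin n) (vk' : Fin m → ℝ), (∀ j, 0 ≤ vk' j ∧ vk' j ≤ H) →
      val k (v k) (alloc (fun i j => ε * (⌊v i j / ε⌋ : ℝ)))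
          - pay (fun i j => ε * (⌊v i j / ε⌋ : ℝ)) k ≥
        val k (v k)
            (alloc (fun i j => ε * (⌊Function.update v k vk' i j / ε⌋ : ℝ)))
          - pay (fun i j => ε * (⌊Function.update v k vk' i j / ε⌋ : ℝ)) k
          - 4 * m * ε := by
  intro v hv k vk' hvk'
  set round : (Fin m → ℝ) → Fin m → ℝ := fun u j => ε * ⌊u j / ε⌋
  have hupdate : (fun i j => ε * (⌊Function.update v k vk' i j / ε⌋ : ℝ))
      = Function.update (fun i => round (v i)) k (round vk') :=
    Function.comp_update round v k vk'
  have hrounded := hDSIC (fun i => round (v i))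
    (fun i j => RoundDown.mul_floor_div_mem_grid hε (hv i j)) k (round vk') (fun j => RoundDown.mul_floor_div_mem_grid hε (hvk' j))
  have hclose : ∀ x, |val k (v k) x - val k (round (v k)) x| ≤ m * ε :=
    fun x => hLip k _ _ x fun j => RoundDown.abs_sub_mul_floor_div_le hε (v k j)
  rw [hupdate]
  linarith [sub_ge_sub_sub_of_abs_sub_le hclose hrounded]

/-- DSIC analogue of Lemma B.2 (IC part).  Let μ = (alloc, pay) be (2mε)-DSIC on rounded
profiles (multiples of ε in [0,H]) with 1-Lipschitz valuations, and define
μ^ε(v) := μ(⌊v⌋_ε), where ⌊v⌋_ε rounds every coordinate down to a multiple of ε.  Then μ^ε is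
(4mε)-DSIC on [0,H]^{n·m}: truthful reporting loses at most 4mε versus any deviation. -/
theorem stmt_15 {X : Type*} (n m : ℕ) (ε H : ℝ) (hε : 0 < ε) (hH : 0 ≤ H)
    (val : Fin n → (Fin m → ℝ) → X → ℝ)
    (hLip : ∀ (k : Fin n) (u u' : Fin m → ℝ) (x : X),
      (∀ j, |u j - u' j| ≤ ε) → |val k u x - val k u' x| ≤ m * ε)
    (alloc : (Fin n → Fin m → ℝ) → X) (pay : (Fin n → Fin m → ℝ) → Fin n → ℝ)
    (hDSIC : ∀ (w : Fin n → Fin m → ℝ),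
      (∀ i j, (∃ a : ℕ, w i j = a * ε) ∧ w i j ≤ H) →
      ∀ (k : Fin n) (wk' : Fin m → ℝ), (∀ j, (∃ a : ℕ, wk' j = a * ε) ∧ wk' j ≤ H) →
        val k (w k) (alloc w) - pay w k ≥
          val k (w k) (alloc (Function.update w k wk'))
            - pay (Function.update w k wk') k - 2 * m * ε) :
    ∀ (v : Fin n → Fin m → ℝ), (∀ i j, 0 ≤ v i j ∧ v i j ≤ H) →
    ∀ (k : Fin n) (vk' : Fin m → ℝ), (∀ j, 0 ≤ vk' j ∧ vk' j ≤ H) →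
      val k (v k) (alloc (fun i j => ε * (⌊v i j / ε⌋ : ℝ)))
          - pay (fun i j => ε * (⌊v i j / ε⌋ : ℝ)) k ≥
        val k (v k)
            (alloc (fun i j => ε * (⌊Function.update v k vk' i j / ε⌋ : ℝ)))
          - pay (fun i j => ε * (⌊Function.update v k vk' i j / ε⌋ : ℝ)) k
          - 4 * m * ε :=
  stmt_15_general n m ε H hε val hLip alloc pay hDSIC
end
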